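/- arXiv:1903.09019 — 9 statements merged into one kernel-verified Lean document; each statement's English description precedes it below -/
import Mathlib

section
/- Let κ be an aperiodic stochastic matrix over a finite nonempty state space S, and let π be an invariant distribution of κ. Then for all z, s ∈ S, the sequence (κ^n)(z,s) converges to π(s) as n → ∞. -/
open Finset Filter

section
set_option linter.unusedSectionVars false
variable {S : Type*} [Fintype S] [DecidableEq S] [Nonempty S]

lemma mc_pow_nonneg (κ : Matrix S S ℝ) (h : ∀ z s, 0 ≤ κ z s) :
    ∀ n z s, 0 ≤ (κ ^ n) z s := by
  intro n
  induction n with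
  | zero => intro z s; rw [pow_zero, Matrix.one_apply]; split <;> norm_num
  | succ n ih =>
    intro z s
    rw [pow_succ, Matrix.mul_apply]
    exact Finset.sum_nonneg fun u _ => mul_nonneg (ih z u) (h u s)

lemma mc_pow_rowsum (κ : Matrix S S ℝ) (h : ∀ z, ∑ s, κ z s = 1) :
    ∀ n z, ∑ s, (κ ^ n) z s = 1 := by
  intro n
  induction n with
  | zero => intro z; simp [Matrix.one_apply]
  | succ n ih =>
    intro z
    simp only [pow_succ, Matrix.mul_apply]
    rw [Finset.sum_comm]
    calc ∑ u, ∑ s, (κ ^ n) z u * κ u s = ∑ u, (κ ^ n) z u * ∑ s, κ u s := by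
          simp_rw [Finset.mul_sum]
      _ = 1 := by simp [h, ih z]

lemma mc_mulVec_le_sup (A : Matrix S S ℝ) (hA : ∀ z u, 0 ≤ A z u)
    (hrow : ∀ z, ∑ u, A z u = 1) (f : S → ℝ) (z : S) :
    A.mulVec f z ≤ Finset.univ.sup' univ_nonempty f := by
  rw [Matrix.mulVec, dotProduct]
  calc ∑ u, A z u * f u ≤ ∑ u, A z u * Finset.univ.sup' univ_nonempty f :=
        Finset.sum_le_sum fun u _ =>
          mul_le_mul_of_nonneg_left (Finset.le_sup' f (mem_univ u)) (hA z u)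
    _ = _ := by rw [← Finset.sum_mul, hrow, one_mul]

lemma mc_inf_le_mulVec (A : Matrix S S ℝ) (hA : ∀ z u, 0 ≤ A z u)
    (hrow : ∀ z, ∑ u, A z u = 1) (f : S → ℝ) (z : S) :
    Finset.univ.inf' univ_nonempty f ≤ A.mulVec f z := by
  rw [Matrix.mulVec, dotProduct]
  calc Finset.univ.inf' univ_nonempty f
      = ∑ u, A z u * Finset.univ.inf' univ_nonempty f := by rw [← Finset.sum_mul, hrow, one_mul]
    _ ≤ ∑ u, A z u * f u :=
        Finset.sum_le_sum fun u _ =>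
          mul_le_mul_of_nonneg_left (Finset.inf'_le f (mem_univ u)) (hA z u)

lemma mc_osc_contract (A : Matrix S S ℝ) (δ : ℝ)
    (hA : ∀ z u, δ ≤ A z u) (hrow : ∀ z, ∑ u, A z u = 1)
    (f : S → ℝ) (z w : S) :
    A.mulVec f z - A.mulVec f w ≤ (1 - (Fintype.card S : ℝ) * δ) *
      (Finset.univ.sup' univ_nonempty f - Finset.univ.inf' univ_nonempty f) := by
  set m := Finset.univ.inf' univ_nonempty f with hm
  set M := Finset.univ.sup' univ_nonempty f with hM
  have key : A.mulVec f z - A.mulVec f w = ∑ u, (A z u - A w u) * (f u - m) := by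
    have e1 : ∀ u : S, (A z u - A w u) * (f u - m)
        = (A z u * f u - A w u * f u) - (A z u * m - A w u * m) := fun u => by ring
    rw [Finset.sum_congr rfl (fun u _ => e1 u), Finset.sum_sub_distrib,
      Finset.sum_sub_distrib, Finset.sum_sub_distrib, ← Finset.sum_mul, ← Finset.sum_mul,
      hrow, hrow]
    simp [Matrix.mulVec, dotProduct]
  rw [key]
  have hbound : ∀ u : S, (A z u - A w u) * (f u - m) ≤ (A z u - δ) * (M - m) := by
    intro u
    have h1 : 0 ≤ f u - m := sub_nonneg.2 (Finset.inf'_le f (mem_univ u))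
    have h2 : f u - m ≤ M - m := sub_le_sub_right (Finset.le_sup' f (mem_univ u)) m
    have h3 : A z u - A w u ≤ A z u - δ := sub_le_sub_left (hA w u) _
    have h4 : 0 ≤ A z u - δ := sub_nonneg.2 (hA z u)
    calc (A z u - A w u) * (f u - m) ≤ (A z u - δ) * (f u - m) :=
          mul_le_mul_of_nonneg_right h3 h1
      _ ≤ (A z u - δ) * (M - m) := mul_le_mul_of_nonneg_left h2 h4
  calc ∑ u, (A z u - A w u) * (f u - m) ≤ ∑ u, (A z u - δ) * (M - m) :=
        Finset.sum_le_sum fun u _ => hbound u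
    _ = (1 - (Fintype.card S : ℝ) * δ) * (M - m) := by
        rw [← Finset.sum_mul, Finset.sum_sub_distrib, hrow]
        simp [Finset.card_univ, mul_comm]

end

/-- Convergence theorem: for an aperiodic stochastic matrix `κ` with invariant
distribution `π`, the entries `(κ^n) z s` converge to `π s` for all `z, s`. -/
theorem convergence_of_aperiodic_stochastic_matrix
    {S : Type*} [Fintype S] [DecidableEq S] [Nonempty S]
    (κ : Matrix S S ℝ)
    (hκ_nonneg : ∀ z s, 0 ≤ κ z s)
    (hκ_rowsum : ∀ z, ∑ s, κ z s = 1)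
    (π : S → ℝ)
    (hπ_nonneg : ∀ s, 0 ≤ π s)
    (hπ_sum : ∑ s, π s = 1)
    (hπ_inv : ∀ s, ∑ z, π z * κ z s = π s)
    (haperiodic : ∃ N : ℕ, ∀ n > N, ∀ z s, 0 < (κ ^ n) z s) :
    ∀ z s, Filter.Tendsto (fun n : ℕ => (κ ^ n) z s) Filter.atTop (nhds (π s)) := by
  obtain ⟨N, hN⟩ := haperiodic
  set n0 : ℕ := N + 1 with hn0
  set A : Matrix S S ℝ := κ ^ n0 with hA
  have hApos : ∀ z s, 0 < A z s := hN n0 (Nat.lt_succ_self N)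
  have hArow : ∀ z, ∑ u, A z u = 1 := mc_pow_rowsum κ hκ_rowsum n0
  -- the minorization constant
  set δ : ℝ := (Finset.univ (α := S × S)).inf' univ_nonempty (fun p => A p.1 p.2) with hδ
  have hδpos : 0 < δ := by
    rw [hδ, Finset.lt_inf'_iff]
    exact fun p _ => hApos p.1 p.2
  have hδle : ∀ z u, δ ≤ A z u := fun z u =>
    Finset.inf'_le (fun p : S × S => A p.1 p.2) (mem_univ (z, u))
  set α : ℝ := 1 - (Fintype.card S : ℝ) * δ with hα
  have hα0 : 0 ≤ α := by
    have z0 : S := Classical.arbitrary S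
    have : (Fintype.card S : ℝ) * δ ≤ 1 := by
      calc (Fintype.card S : ℝ) * δ = ∑ _u : S, δ := by
            simp [Finset.card_univ, mul_comm]
        _ ≤ ∑ u, A z0 u := Finset.sum_le_sum fun u _ => hδle z0 u
        _ = 1 := hArow z0
    linarith
  have hα1 : α < 1 := by
    have hcard : (0 : ℝ) < Fintype.card S := by
      exact_mod_cast Fintype.card_pos
    nlinarith
  intro z s
  -- the column functions and oscillation
  set f : ℕ → S → ℝ := fun n u => (κ ^ n) u s with hf
  set d : ℕ → ℝ := fun n =>
    Finset.univ.sup' univ_nonempty (f n) - Finset.univ.inf' univ_nonempty (f n) with hd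
  have hd0 : ∀ n, 0 ≤ d n := by
    intro n
    have x0 : S := Classical.arbitrary S
    have h1 := Finset.inf'_le (f n) (mem_univ x0)
    have h2 := Finset.le_sup' (f n) (mem_univ x0)
    simp only [hd]
    linarith
  -- invariance for all powers
  have hπpow : ∀ n u, ∑ x, π x * (κ ^ n) x u = π u := by
    intro n
    induction n with
    | zero => intro u; simp [Matrix.one_apply]
    | succ n ih =>
      intro u
      simp only [pow_succ, Matrix.mul_apply, Finset.mul_sum]
      rw [Finset.sum_comm]
      calc ∑ y, ∑ x, π x * ((κ ^ n) x y * κ y u)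
          = ∑ y, (∑ x, π x * (κ ^ n) x y) * κ y u := by
            congr 1; funext y; rw [Finset.sum_mul]; congr 1; funext x; ring
        _ = ∑ y, π y * κ y u := by simp_rw [ih]
        _ = π u := hπ_inv u
  -- the next column function is a stochastic image
  have hstep : ∀ n u, f (n + 1) u = κ.mulVec (f n) u := by
    intro n u
    simp only [hf, pow_succ', Matrix.mul_apply, Matrix.mulVec, dotProduct]
  have hjump : ∀ n u, f (n + n0) u = A.mulVec (f n) u := by
    intro n u
    have : κ ^ (n + n0) = A * κ ^ n := by rw [hA, ← pow_add, Nat.add_comm]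
    simp only [hf, this, Matrix.mul_apply, Matrix.mulVec, dotProduct]
  have hmono : ∀ n, d (n + 1) ≤ d n := by
    intro n
    have h1 : Finset.univ.sup' univ_nonempty (f (n + 1)) ≤
        Finset.univ.sup' univ_nonempty (f n) := by
      apply Finset.sup'_le
      intro u _
      rw [hstep n u]
      exact mc_mulVec_le_sup κ hκ_nonneg hκ_rowsum (f n) u
    have h2 : Finset.univ.inf' univ_nonempty (f n) ≤
        Finset.univ.inf' univ_nonempty (f (n + 1)) := by
      apply Finset.le_inf'
      intro u _
      rw [hstep n u]
      exact mc_inf_le_mulVec κ hκ_nonneg hκ_rowsum (f n) u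
    simp only [hd]
    linarith
  have hanti : Antitone d := antitone_nat_of_succ_le hmono
  have hcontr : ∀ n, d (n + n0) ≤ α * d n := by
    intro n
    obtain ⟨a, -, ha⟩ := Finset.exists_mem_eq_sup' univ_nonempty (f (n + n0))
    obtain ⟨b, -, hb⟩ := Finset.exists_mem_eq_inf' univ_nonempty (f (n + n0))
    have heq : d (n + n0) = f (n + n0) a - f (n + n0) b := by
      simp only [hd, ha, hb]
    rw [heq, hjump n a, hjump n b]
    exact mc_osc_contract A δ hδle hArow (f n) a b
  have hgeo : ∀ k, d (k * n0) ≤ α ^ k * d 0 := by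
    intro k
    induction k with
    | zero => simp
    | succ k ih =>
      have : (k + 1) * n0 = k * n0 + n0 := by ring
      rw [this]
      calc d (k * n0 + n0) ≤ α * d (k * n0) := hcontr _
        _ ≤ α * (α ^ k * d 0) := mul_le_mul_of_nonneg_left ih hα0
        _ = α ^ (k + 1) * d 0 := by ring
  have hdn : ∀ n, d n ≤ α ^ (n / n0) * d 0 := by
    intro n
    calc d n ≤ d (n / n0 * n0) := hanti (Nat.div_mul_le_self n n0)
      _ ≤ α ^ (n / n0) * d 0 := hgeo _
  -- d tends to zero
  have hdiv : Tendsto (fun n : ℕ => n / n0) atTop atTop := by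
    apply tendsto_atTop_atTop.2
    intro b
    exact ⟨b * n0, fun n hn => (Nat.le_div_iff_mul_le (Nat.succ_pos N)).2 hn⟩
  have hpow : Tendsto (fun n : ℕ => α ^ (n / n0) * d 0) atTop (nhds 0) := by
    have := (tendsto_pow_atTop_nhds_zero_of_lt_one hα0 hα1).comp hdiv
    simpa using this.mul_const (d 0)
  have hdlim : Tendsto d atTop (nhds 0) := squeeze_zero hd0 hdn hpow
  -- π s lies between inf and sup of each column
  have hπle : ∀ n, π s ≤ Finset.univ.sup' univ_nonempty (f n) := by
    intro n
    calc π s = ∑ x, π x * f n x := (hπpow n s).symm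
      _ ≤ ∑ x, π x * Finset.univ.sup' univ_nonempty (f n) :=
          Finset.sum_le_sum fun x _ =>
            mul_le_mul_of_nonneg_left (Finset.le_sup' (f n) (mem_univ x)) (hπ_nonneg x)
      _ = _ := by rw [← Finset.sum_mul, hπ_sum, one_mul]
  have hπge : ∀ n, Finset.univ.inf' univ_nonempty (f n) ≤ π s := by
    intro n
    calc Finset.univ.inf' univ_nonempty (f n)
        = ∑ x, π x * Finset.univ.inf' univ_nonempty (f n) := by
          rw [← Finset.sum_mul, hπ_sum, one_mul]
      _ ≤ ∑ x, π x * f n x :=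
          Finset.sum_le_sum fun x _ =>
            mul_le_mul_of_nonneg_left (Finset.inf'_le (f n) (mem_univ x)) (hπ_nonneg x)
      _ = π s := hπpow n s
  have habs : ∀ n, ‖f n z - π s‖ ≤ d n := by
    intro n
    rw [Real.norm_eq_abs, abs_sub_le_iff]
    constructor
    · have := Finset.le_sup' (f n) (mem_univ z)
      have := hπge n
      simp only [hd]; linarith
    · have := Finset.inf'_le (f n) (mem_univ z)
      have := hπle n
      simp only [hd]; linarith
  have : Tendsto (fun n => f n z - π s) atTop (nhds 0) :=
    squeeze_zero_norm habs hdlim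
  have := tendsto_sub_nhds_zero_iff.1 this
  exact this
end

section
/- Every irreducible stochastic matrix κ over a finite nonempty state space S has exactly one invariant distribution. -/
section Aux

variable {S : Type*} [Fintype S] [DecidableEq S]

/-- Powers of an entrywise nonnegative matrix are entrywise nonnegative. -/
lemma pow_nonneg_aux (κ : Matrix S S ℝ) (hκ_nonneg : ∀ z s, 0 ≤ κ z s) :
    ∀ n, ∀ z s, 0 ≤ (κ ^ n) z s := by
  intro n
  induction n with
  | zero =>
    intro z s
    simp only [pow_zero, Matrix.one_apply]
    split <;> norm_num
  | succ n ih =>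
    intro z s
    rw [pow_succ, Matrix.mul_apply]
    exact Finset.sum_nonneg fun t _ => mul_nonneg (ih z t) (hκ_nonneg t s)

/-- An invariant vector is invariant under all powers. -/
lemma invariant_pow_aux (κ : Matrix S S ℝ) (π : S → ℝ)
    (hinv : ∀ s, ∑ z, π z * κ z s = π s) :
    ∀ n, ∀ s, ∑ z, π z * (κ ^ n) z s = π s := by
  intro n
  induction n with
  | zero =>
    intro s
    simp [Matrix.one_apply]
  | succ n ih =>
    intro s
    have : ∀ z, π z * (κ ^ (n + 1)) z s = ∑ t, (π z * (κ ^ n) z t) * κ t s := by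
      intro z
      rw [pow_succ, Matrix.mul_apply, Finset.mul_sum]
      simp [mul_assoc]
    simp_rw [this]
    rw [Finset.sum_comm]
    calc ∑ t, ∑ z, (π z * (κ ^ n) z t) * κ t s
        = ∑ t, (∑ z, π z * (κ ^ n) z t) * κ t s := by
          simp [Finset.sum_mul]
      _ = ∑ t, π t * κ t s := by simp_rw [ih]
      _ = π s := hinv s

/-- A nonnegative nonzero invariant vector is strictly positive. -/
lemma invariant_pos_aux (κ : Matrix S S ℝ)
    (hκ_nonneg : ∀ z s, 0 ≤ κ z s)
    (hirred : ∀ z s, ∃ n > 0, 0 < (κ ^ n) z s)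
    (π : S → ℝ) (hpos : ∀ s, 0 ≤ π s)
    (hinv : ∀ s, ∑ z, π z * κ z s = π s)
    (z : S) (hz : 0 < π z) : ∀ s, 0 < π s := by
  intro s
  obtain ⟨n, -, hn⟩ := hirred z s
  have h := invariant_pow_aux κ π hinv n s
  have : π z * (κ ^ n) z s ≤ ∑ w, π w * (κ ^ n) w s := by
    apply Finset.single_le_sum (f := fun w => π w * (κ ^ n) w s)
    · intro w _
      exact mul_nonneg (hpos w) (pow_nonneg_aux κ hκ_nonneg n w s)
    · exact Finset.mem_univ z
  rw [h] at this
  exact lt_of_lt_of_le (mul_pos hz hn) this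

/-- If a vector is pointwise subinvariant, it is invariant (mass conservation). -/
lemma subinvariant_eq_aux (κ : Matrix S S ℝ)
    (hκ_rowsum : ∀ z, ∑ s, κ z s = 1)
    (w : S → ℝ) (hle : ∀ s, w s ≤ ∑ z, w z * κ z s) :
    ∀ s, ∑ z, w z * κ z s = w s := by
  have htot : ∑ s, (∑ z, w z * κ z s) = ∑ s, w s := by
    rw [Finset.sum_comm]
    simp [← Finset.mul_sum, hκ_rowsum]
  have := (Finset.sum_eq_sum_iff_of_le (fun s _ => hle s)).mp htot.symm
  intro s
  exact ((this s (Finset.mem_univ s))).symm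

end Aux

/-- Perron–Frobenius: an irreducible stochastic matrix has exactly one
invariant distribution. -/
theorem irreducible_has_unique_invariant_distribution
    {S : Type*} [Fintype S] [DecidableEq S] [Nonempty S]
    (κ : Matrix S S ℝ)
    (hκ_nonneg : ∀ z s, 0 ≤ κ z s)
    (hκ_rowsum : ∀ z, ∑ s, κ z s = 1)
    (hirred : ∀ z s, ∃ n > 0, 0 < (κ ^ n) z s) :
    ∃! π : S → ℝ, (∀ s, 0 ≤ π s) ∧ (∑ s, π s = 1) ∧
      (∀ s, ∑ z, π z * κ z s = π s) := by
  -- Existence of a nonzero invariant vector via determinant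
  have hdet : (κ - 1).det = 0 := by
    rw [← Matrix.exists_mulVec_eq_zero_iff]
    refine ⟨fun _ => 1, ?_, ?_⟩
    · intro h
      have := congrFun h (Classical.arbitrary S)
      simp at this
    · funext z
      simp [Matrix.mulVec, dotProduct, Matrix.sub_apply, Matrix.one_apply,
        Finset.sum_sub_distrib, hκ_rowsum z]
  have hdetT : (κ.transpose - 1).det = 0 := by
    rw [← Matrix.det_transpose]
    simpa [Matrix.transpose_sub] using hdet
  obtain ⟨v, hv0, hv⟩ := (Matrix.exists_mulVec_eq_zero_iff).mpr hdetT
  have hvinv : ∀ s, ∑ z, v z * κ z s = v s := by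
    intro s
    have := congrFun hv s
    simp only [Matrix.sub_mulVec, Pi.sub_apply, Pi.zero_apply, sub_eq_zero,
      Matrix.one_mulVec] at this
    have h1 : κ.transpose.mulVec v s = ∑ z, v z * κ z s := by
      simp [Matrix.mulVec, dotProduct, Matrix.transpose_apply, mul_comm]
    rw [h1] at this
    exact this
  -- Take absolute value: still invariant
  set w : S → ℝ := fun s => |v s| with hw
  have hwle : ∀ s, w s ≤ ∑ z, w z * κ z s := by
    intro s
    calc |v s| = |∑ z, v z * κ z s| := by rw [hvinv s]
      _ ≤ ∑ z, |v z * κ z s| := Finset.abs_sum_le_sum_abs _ _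
      _ = ∑ z, |v z| * κ z s := by
          refine Finset.sum_congr rfl fun z _ => ?_
          rw [abs_mul, abs_of_nonneg (hκ_nonneg z s)]
  have hwinv : ∀ s, ∑ z, w z * κ z s = w s :=
    subinvariant_eq_aux κ hκ_rowsum w hwle
  have hwnonneg : ∀ s, 0 ≤ w s := fun s => abs_nonneg _
  have hc : 0 < ∑ s, w s := by
    obtain ⟨z, hz⟩ : ∃ z, v z ≠ 0 := by
      by_contra h
      push_neg at h
      exact hv0 (funext h)
    have : 0 < w z := abs_pos.mpr hz
    calc (0 : ℝ) < w z := this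
      _ ≤ ∑ s, w s := Finset.single_le_sum (fun s _ => hwnonneg s) (Finset.mem_univ z)
  set c : ℝ := ∑ s, w s with hcdef
  refine ⟨fun s => w s / c, ⟨fun s => div_nonneg (hwnonneg s) hc.le, ?_, ?_⟩, ?_⟩
  · rw [← Finset.sum_div, div_self hc.ne']
  · intro s
    calc ∑ z, w z / c * κ z s = (∑ z, w z * κ z s) / c := by
          rw [Finset.sum_div]
          exact Finset.sum_congr rfl fun z _ => by ring
      _ = w s / c := by rw [hwinv s]
  · -- Uniqueness
    rintro π' ⟨h'nonneg, h'sum, h'inv⟩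
    -- It suffices to show any two invariant distributions are equal.
    -- First show the candidate π := w/c is a distribution; then show π' = π.
    -- We prove: any two invariant distributions agree.
    have key : ∀ π₁ π₂ : S → ℝ, (∀ s, 0 ≤ π₁ s) → (∑ s, π₁ s = 1) →
        (∀ s, ∑ z, π₁ z * κ z s = π₁ s) →
        (∀ s, 0 ≤ π₂ s) → (∑ s, π₂ s = 1) →
        (∀ s, ∑ z, π₂ z * κ z s = π₂ s) → π₁ = π₂ := by
      intro π₁ π₂ h1n h1s h1i h2n h2s h2i
      set d : S → ℝ := fun s => π₁ s - π₂ s with hd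
      have hdinv : ∀ s, ∑ z, d z * κ z s = d s := by
        intro s
        simp only [hd, sub_mul, Finset.sum_sub_distrib, h1i s, h2i s]
      have hdsum : ∑ s, d s = 0 := by
        simp [hd, Finset.sum_sub_distrib, h1s, h2s]
      set p : S → ℝ := fun s => max (d s) 0 with hp
      have hpnonneg : ∀ s, 0 ≤ p s := fun s => le_max_right _ _
      have hple : ∀ s, p s ≤ ∑ z, p z * κ z s := by
        intro s
        have h1 : d s ≤ ∑ z, p z * κ z s := by
          rw [← hdinv s]
          exact Finset.sum_le_sum fun z _ =>
            mul_le_mul_of_nonneg_right (le_max_left _ _) (hκ_nonneg z s)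
        have h2 : (0 : ℝ) ≤ ∑ z, p z * κ z s :=
          Finset.sum_nonneg fun z _ => mul_nonneg (hpnonneg z) (hκ_nonneg z s)
        exact max_le h1 h2
      have hpinv : ∀ s, ∑ z, p z * κ z s = p s :=
        subinvariant_eq_aux κ hκ_rowsum p hple
      by_cases hzero : ∀ s, p s = 0
      · -- d ≤ 0 everywhere and sums to 0, so d = 0
        have hdle : ∀ s, d s ≤ 0 := by
          intro s
          have := hzero s
          simp only [hp] at this
          by_contra h
          push_neg at h
          rw [max_eq_left h.le] at this
          exact h.ne' this
        funext s
        have hall := (Finset.sum_eq_zero_iff_of_nonpos (fun t _ => hdle t)).mp hdsum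
        have : d s = 0 := hall s (Finset.mem_univ s)
        linarith [sub_eq_zero.mp this]
      · push_neg at hzero
        obtain ⟨z, hz⟩ := hzero
        have hzpos : 0 < p z := lt_of_le_of_ne (hpnonneg z) (Ne.symm hz)
        have hppos := invariant_pos_aux κ hκ_nonneg hirred p hpnonneg hpinv z hzpos
        have hdpos : ∀ s, 0 < d s := by
          intro s
          have := hppos s
          simp only [hp] at this
          by_contra h
          push_neg at h
          rw [max_eq_right h] at this
          exact lt_irrefl 0 this
        have : 0 < ∑ s, d s :=
          Finset.sum_pos (fun s _ => hdpos s) Finset.univ_nonempty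
        linarith [hdsum]
    exact key π' (fun s => w s / c) h'nonneg h'sum h'inv
      (fun s => div_nonneg (hwnonneg s) hc.le)
      (by rw [← Finset.sum_div, div_self hc.ne'])
      (fun s => by
        calc ∑ z, w z / c * κ z s = (∑ z, w z * κ z s) / c := by
              rw [Finset.sum_div]
              exact Finset.sum_congr rfl fun z _ => by ring
          _ = w s / c := by rw [hwinv s])
end

section
/- Every irreducible stochastic matrix κ over a finite nonempty state space S has at least one invariant distribution. -/
/-!
A stochastic matrix `κ` acts on the standard simplex by `π ↦ π κ`, a continuous linear map
preserving a compact convex set. The Cesàro averages `(1/n) ∑_{k<n} π₀ κᵏ` of an orbit stay in the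
simplex and are moved by `κ` only by `(π₀ κⁿ - π₀)/n → 0`, so any limit point of them is
invariant (the Krylov–Bogolyubov argument).
-/

open Filter Function Matrix Set Topology

theorem Convex.birkhoffAverage_mem {𝕜 E : Type*} [Field 𝕜] [LinearOrder 𝕜]
    [IsStrictOrderedRing 𝕜] [AddCommGroup E] [Module 𝕜 E] {K : Set E} (hK : Convex 𝕜 K)
    {f : E → E} (hf : MapsTo f K K) {x : E} (hx : x ∈ K) (n : ℕ) :
    birkhoffAverage 𝕜 f id (n + 1) x ∈ K := by
  have := hK.sum_mem (t := Finset.range (n + 1)) (w := fun _ ↦ ((n + 1 : ℕ) : 𝕜)⁻¹)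
    (z := fun k ↦ f^[k] x) (fun _ _ ↦ by positivity)
    (by simp [mul_inv_cancel₀ (n.cast_add_one_ne_zero (R := 𝕜))])
    (fun k _ ↦ hf.iterate k hx)
  simpa [birkhoffAverage, birkhoffSum, Finset.smul_sum] using this

theorem ContinuousLinearMap.exists_mem_isFixedPt_of_mapsTo {E : Type*} [NormedAddCommGroup E]
    [NormedSpace ℝ E] (T : E →L[ℝ] E) {K : Set E} (hK : IsCompact K) (hKconv : Convex ℝ K)
    (hKne : K.Nonempty) (hTK : MapsTo T K K) : ∃ x ∈ K, IsFixedPt T x := by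
  obtain ⟨x₀, hx₀⟩ := hKne
  set avg : ℕ → E := fun n ↦ birkhoffAverage ℝ T id (n + 1) x₀
  have map_avg (n : ℕ) : T (avg n) = birkhoffAverage ℝ T id (n + 1) (T x₀) := by
    simp only [avg, birkhoffAverage, birkhoffSum, map_smul, map_sum, id,
      ← iterate_succ_apply' T, iterate_succ_apply]
  have almost_fixed : Tendsto (fun n ↦ T (avg n) - avg n) atTop (𝓝 0) := by
    have orbit_bdd := hK.isBounded.subset (range_subset_iff.2 fun k ↦ hTK.iterate k hx₀)
    simp only [map_avg]
    exact (tendsto_birkhoffAverage_apply_sub_birkhoffAverage ℝ (g := id) orbit_bdd).comp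
      (tendsto_add_atTop_nat 1)
  obtain ⟨x, hx, φ, hφ, hlim⟩ := hK.tendsto_subseq (hKconv.birkhoffAverage_mem hTK hx₀)
  refine ⟨x, hx, sub_eq_zero.1 (tendsto_nhds_unique ?_ (almost_fixed.comp hφ.tendsto_atTop))⟩
  exact ((T.continuous.tendsto x).comp hlim).sub hlim

theorem vecMul_mem_stdSimplex {R n : Type*} [Fintype n] [CommSemiring R] [PartialOrder R]
    [IsOrderedRing R] {M : Matrix n n R} (hM_nonneg : ∀ i j, 0 ≤ M i j)
    (hM_rowsum : ∀ i, ∑ j, M i j = 1) {x : n → R} (hx : x ∈ stdSimplex R n) :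
    x ᵥ* M ∈ stdSimplex R n := by
  refine ⟨fun j ↦ Finset.sum_nonneg fun i _ ↦ mul_nonneg (hx.1 i) (hM_nonneg i j), ?_⟩
  simp only [vecMul, dotProduct]
  rw [Finset.sum_comm]
  simp only [← Finset.mul_sum, hM_rowsum, mul_one]
  exact hx.2

theorem irreducible_has_invariant_distribution_general
    {S : Type*} [Fintype S] [Nonempty S]
    (κ : Matrix S S ℝ)
    (hκ_nonneg : ∀ z s, 0 ≤ κ z s)
    (hκ_rowsum : ∀ z, ∑ s, κ z s = 1) :
    ∃ π : S → ℝ, (∀ s, 0 ≤ π s) ∧ (∑ s, π s = 1) ∧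
      (∀ s, ∑ z, π z * κ z s = π s) := by
  obtain ⟨π, hπ, hfix⟩ := κ.vecMulLinear.toContinuousLinearMap.exists_mem_isFixedPt_of_mapsTo
    (isCompact_stdSimplex ℝ S) (convex_stdSimplex ℝ S) (isPathConnected_stdSimplex S).nonempty
    fun _ ↦ vecMul_mem_stdSimplex hκ_nonneg hκ_rowsum
  exact ⟨π, hπ.1, hπ.2, congrFun hfix⟩

/-- An irreducible stochastic matrix has at least one invariant distribution. -/
theorem irreducible_has_invariant_distribution
    {S : Type*} [Fintype S] [DecidableEq S] [Nonempty S]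
    (κ : Matrix S S ℝ)
    (hκ_nonneg : ∀ z s, 0 ≤ κ z s)
    (hκ_rowsum : ∀ z, ∑ s, κ z s = 1)
    (hirred : ∀ z s, ∃ n > 0, 0 < (κ ^ n) z s) :
    ∃ π : S → ℝ, (∀ s, 0 ≤ π s) ∧ (∑ s, π s = 1) ∧
      (∀ s, ∑ z, π z * κ z s = π s) :=
  irreducible_has_invariant_distribution_general κ hκ_nonneg hκ_rowsum
end

section
/- An irreducible stochastic matrix κ over a finite nonempty state space S has at most one invariant distribution: if π and π′ are both invariant distributions of κ, then π = π′. -/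
/-!
Subtracting from an invariant vector `u` the largest multiple `c • v` of a positive invariant
vector `v` that stays below it leaves a nonnegative invariant vector with a zero entry. By
irreducibility every entry feeds into that zero entry through some power of the matrix, so
the difference vanishes: `u = c • v`. For two distributions, comparing total masses gives
`c = 1`.
-/

namespace Matrix

variable {n R : Type*} [Fintype n] [DecidableEq n]

lemma vecMul_pow_eq_self [Semiring R] {A : Matrix n n R} {v : n → R} (hv : v ᵥ* A = v)
    (k : ℕ) : v ᵥ* (A ^ k) = v := by
  induction k with
  | zero => simp
  | succ k ih => rw [pow_succ, ← vecMul_vecMul, ih, hv]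

section OrderedRing

variable [Ring R] [LinearOrder R] [IsStrictOrderedRing R] {A : Matrix n n R} {v : n → R}

lemma IsIrreducible.eq_zero_of_vecMul_eq_self (hA : IsIrreducible A) (hv_nonneg : 0 ≤ v)
    (hv : v ᵥ* A = v) {j : n} (hj : v j = 0) : v = 0 := by
  funext i
  obtain ⟨k, -, hk⟩ := (isIrreducible_iff_exists_pow_pos hA.nonneg).mp hA i j
  have hle : v i * (A ^ k) i j ≤ (v ᵥ* A ^ k) j :=
    Finset.single_le_sum (fun l _ => mul_nonneg (hv_nonneg l) (pow_apply_nonneg hA.nonneg k l j))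
      (Finset.mem_univ i)
  rw [vecMul_pow_eq_self hv, hj] at hle
  exact le_antisymm (nonpos_of_mul_nonpos_left hle hk) (hv_nonneg i)

lemma IsIrreducible.pos_of_vecMul_eq_self (hA : IsIrreducible A) (hv_nonneg : 0 ≤ v)
    (hv_ne : v ≠ 0) (hv : v ᵥ* A = v) (j : n) : 0 < v j :=
  (hv_nonneg j).lt_of_ne' fun hj => hv_ne (hA.eq_zero_of_vecMul_eq_self hv_nonneg hv hj)

end OrderedRing

lemma IsIrreducible.eq_smul_of_vecMul_eq_self [Field R] [LinearOrder R] [IsStrictOrderedRing R]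
    {A : Matrix n n R} (hA : IsIrreducible A) {u v : n → R} (hu : u ᵥ* A = u)
    (hv_nonneg : 0 ≤ v) (hv_ne : v ≠ 0) (hv : v ᵥ* A = v) : ∃ c : R, u = c • v := by
  have hv_pos := hA.pos_of_vecMul_eq_self hv_nonneg hv_ne hv
  obtain ⟨i₀, -⟩ := Function.ne_iff.mp hv_ne
  obtain ⟨j, -, hj⟩ := Finset.exists_min_image Finset.univ (fun i => u i / v i)
    ⟨i₀, Finset.mem_univ i₀⟩
  refine ⟨u j / v j, sub_eq_zero.mp (hA.eq_zero_of_vecMul_eq_self (j := j) ?_ ?_ ?_)⟩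
  · intro i
    simpa [sub_nonneg] using (le_div_iff₀ (hv_pos i)).mp (hj i (Finset.mem_univ i))
  · rw [sub_vecMul, smul_vecMul, hu, hv]
  · simp [div_mul_cancel₀ _ (hv_pos j).ne']

end Matrix

theorem irreducible_invariant_distribution_unique_general
    {S : Type*} [Fintype S] [DecidableEq S]
    (κ : Matrix S S ℝ)
    (hκ_nonneg : ∀ z s, 0 ≤ κ z s)
    (hirred : ∀ z s, ∃ n > 0, 0 < (κ ^ n) z s)
    (π π' : S → ℝ)
    (hπ_sum : ∑ s, π s = 1)
    (hπ_inv : ∀ s, ∑ z, π z * κ z s = π s)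
    (hπ'_nonneg : ∀ s, 0 ≤ π' s) (hπ'_sum : ∑ s, π' s = 1)
    (hπ'_inv : ∀ s, ∑ z, π' z * κ z s = π' s) :
    π = π' := by
  have hκ : κ.IsIrreducible := (Matrix.isIrreducible_iff_exists_pow_pos hκ_nonneg).mpr hirred
  have hπ'_ne : π' ≠ 0 := by
    rintro rfl
    simp at hπ'_sum
  obtain ⟨c, rfl⟩ :=
    hκ.eq_smul_of_vecMul_eq_self (funext hπ_inv) hπ'_nonneg hπ'_ne (funext hπ'_inv)
  have hc : c = 1 := by simpa [← Finset.mul_sum, hπ'_sum] using hπ_sum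
  rw [hc, one_smul]

/-- An irreducible stochastic matrix has at most one invariant distribution. -/
theorem irreducible_invariant_distribution_unique
    {S : Type*} [Fintype S] [DecidableEq S] [Nonempty S]
    (κ : Matrix S S ℝ)
    (hκ_nonneg : ∀ z s, 0 ≤ κ z s)
    (hκ_rowsum : ∀ z, ∑ s, κ z s = 1)
    (hirred : ∀ z s, ∃ n > 0, 0 < (κ ^ n) z s)
    (π π' : S → ℝ)
    (hπ_nonneg : ∀ s, 0 ≤ π s) (hπ_sum : ∑ s, π s = 1)
    (hπ_inv : ∀ s, ∑ z, π z * κ z s = π s)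
    (hπ'_nonneg : ∀ s, 0 ≤ π' s) (hπ'_sum : ∑ s, π' s = 1)
    (hπ'_inv : ∀ s, ∑ z, π' z * κ z s = π' s) :
    π = π' :=
  irreducible_invariant_distribution_unique_general κ hκ_nonneg hirred π π' hπ_sum hπ_inv hπ'_nonneg
    hπ'_sum hπ'_inv
end

section
/- Let κ be an irreducible stochastic matrix over a finite nonempty state space S. Then every left 1-eigenvector of κ has constant sign: if x : S → ℝ satisfies ∑_{z∈S} x(z) κ(z,s) = x(s) for all s ∈ S, then either x(s) ≥ 0 for all s ∈ S or x(s) ≤ 0 for all s ∈ S. -/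
private lemma pow_eig {S : Type*} [Fintype S] [DecidableEq S]
    (κ : Matrix S S ℝ) (y : S → ℝ)
    (hy : ∀ s, ∑ z, y z * κ z s = y s) :
    ∀ n s, ∑ z, y z * (κ ^ n) z s = y s := by
  intro n
  induction n with
  | zero => intro s; simp [Matrix.one_apply]
  | succ n ih =>
    intro s
    rw [pow_succ]
    calc ∑ z, y z * (κ ^ n * κ) z s
        = ∑ z, ∑ w, y z * ((κ ^ n) z w * κ w s) := by
          simp [Matrix.mul_apply, Finset.mul_sum]
      _ = ∑ w, (∑ z, y z * (κ ^ n) z w) * κ w s := by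
          rw [Finset.sum_comm]
          simp [Finset.sum_mul, mul_assoc]
      _ = ∑ w, y w * κ w s := by simp [ih]
      _ = y s := hy s

/-- Every left 1-eigenvector of an irreducible stochastic matrix has constant sign. -/
theorem irreducible_eigenvector_constant_sign
    {S : Type*} [Fintype S] [DecidableEq S] [Nonempty S]
    (κ : Matrix S S ℝ)
    (hκ_nonneg : ∀ z s, 0 ≤ κ z s)
    (hκ_rowsum : ∀ z, ∑ s, κ z s = 1)
    (hirred : ∀ z s, ∃ n > 0, 0 < (κ ^ n) z s)
    (x : S → ℝ)
    (hx : ∀ s, ∑ z, x z * κ z s = x s) :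
    (∀ s, 0 ≤ x s) ∨ (∀ s, x s ≤ 0) := by
  by_contra h
  push_neg at h
  obtain ⟨⟨b, hb⟩, a, ha⟩ := h
  -- pointwise inequality: |x s| ≤ ∑ z, |x z| * κ z s
  have hle : ∀ s, |x s| ≤ ∑ z, |x z| * κ z s := by
    intro s
    calc |x s| = |∑ z, x z * κ z s| := by rw [hx s]
      _ ≤ ∑ z, |x z * κ z s| := Finset.abs_sum_le_sum_abs _ _
      _ = ∑ z, |x z| * κ z s := by
          refine Finset.sum_congr rfl fun z _ => ?_
          rw [abs_mul, abs_of_nonneg (hκ_nonneg z s)]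
  -- total sums are equal
  have hsum : ∑ s, ∑ z, |x z| * κ z s = ∑ s, |x s| := by
    rw [Finset.sum_comm]
    simp [← Finset.mul_sum, hκ_rowsum]
  -- hence equality pointwise
  have habs : ∀ s, ∑ z, |x z| * κ z s = |x s| := by
    have := (Finset.sum_eq_sum_iff_of_le (fun s _ => hle s)).mp hsum.symm
    intro s
    exact (this s (Finset.mem_univ s)).symm
  -- y = |x| + x is a nonneg eigenvector
  set y : S → ℝ := fun s => |x s| + x s with hy_def
  have hy_nonneg : ∀ s, 0 ≤ y s := fun s => by
    simp only [hy_def]; linarith [abs_nonneg (x s), neg_abs_le (x s)]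
  have hy_eig : ∀ s, ∑ z, y z * κ z s = y s := by
    intro s
    simp only [hy_def, add_mul, Finset.sum_add_distrib, habs s, hx s]
  have hy_pow := pow_eig κ y hy_eig
  -- y a > 0, y b = 0
  have hya : 0 < y a := by
    simp only [hy_def]; have := abs_nonneg (x a); linarith
  have hyb : y b = 0 := by
    simp only [hy_def, abs_of_nonpos (le_of_lt hb)]; ring
  have hpow_nonneg : ∀ (n : ℕ) (z s : S), 0 ≤ (κ ^ n) z s := by
    intro n z s
    induction n generalizing z s with
    | zero => by_cases h : z = s <;> simp [Matrix.one_apply, h]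
    | succ m ih =>
      rw [pow_succ, Matrix.mul_apply]
      exact Finset.sum_nonneg fun w _ => mul_nonneg (ih z w) (hκ_nonneg w s)
  obtain ⟨n, hn, hpos⟩ := hirred a b
  have hterm : y a * (κ ^ n) a b ≤ ∑ z, y z * (κ ^ n) z b :=
    Finset.single_le_sum
      (fun z _ => mul_nonneg (hy_nonneg z) (hpow_nonneg n z b)) (Finset.mem_univ a)
  rw [hy_pow n b, hyb] at hterm
  nlinarith [mul_pos hya hpos]
end

section
/- Let π be a distribution over a finite nonempty state space S and let q be a stochastic matrix over S. Define α(z,s) = min{1, π(s) q(s,z) / (π(z) q(z,s))} when π(z) q(z,s) > 0, and α(z,s) = 1 when π(z) q(z,s) = 0. Define the Metropolis–Hastings kernel κ by κ(z,s) = q(z,s) α(z,s) for s ≠ z, and κ(z,z) = q(z,z) + ∑_{s ≠ z} q(z,s) (1 − α(z,s)). Then κ is a stochastic matrix and κ preserves the detailed balance with respect to π: π(z) κ(z,s) = π(s) κ(s,z) for all z, s ∈ S. -/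
/-- The Metropolis–Hastings kernel is a stochastic matrix and preserves
detailed balance with respect to `π`. -/
theorem metropolis_hastings_kernel_stochastic_and_reversible
    {S : Type*} [Fintype S] [DecidableEq S] [Nonempty S]
    (π : S → ℝ)
    (hπ_nonneg : ∀ s, 0 ≤ π s)
    (hπ_sum : ∑ s, π s = 1)
    (q : S → S → ℝ)
    (hq_nonneg : ∀ z s, 0 ≤ q z s)
    (hq_rowsum : ∀ z, ∑ s, q z s = 1)
    (α : S → S → ℝ)
    (hα : ∀ z s, (0 < π z * q z s → α z s = min 1 (π s * q s z / (π z * q z s))) ∧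
                 (π z * q z s = 0 → α z s = 1))
    (κ : S → S → ℝ)
    (hκ_off : ∀ z s, s ≠ z → κ z s = q z s * α z s)
    (hκ_diag : ∀ z, κ z z = q z z + ∑ s ∈ Finset.univ.filter (fun s => s ≠ z),
      q z s * (1 - α z s)) :
    (∀ z s, 0 ≤ κ z s) ∧ (∀ z, ∑ s, κ z s = 1) ∧
      (∀ z s, π z * κ z s = π s * κ s z) := by
  have hα_nonneg : ∀ z s, 0 ≤ α z s := by
    intro z s
    rcases (hα z s) with ⟨h1, h2⟩
    rcases eq_or_lt_of_le (mul_nonneg (hπ_nonneg z) (hq_nonneg z s)) with h | h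
    · rw [h2 h.symm]; norm_num
    · rw [h1 h]
      exact le_min zero_le_one (div_nonneg (mul_nonneg (hπ_nonneg s) (hq_nonneg s z)) h.le)
  have hα_le : ∀ z s, α z s ≤ 1 := by
    intro z s
    rcases (hα z s) with ⟨h1, h2⟩
    rcases eq_or_lt_of_le (mul_nonneg (hπ_nonneg z) (hq_nonneg z s)) with h | h
    · rw [h2 h.symm]
    · rw [h1 h]; exact min_le_left _ _
  have hκ_nonneg : ∀ z s, 0 ≤ κ z s := by
    intro z s
    by_cases h : s = z
    · rw [h, hκ_diag z]
      refine add_nonneg (hq_nonneg z z) (Finset.sum_nonneg fun s _ => ?_)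
      exact mul_nonneg (hq_nonneg z s) (by linarith [hα_le z s])
    · rw [hκ_off z s h]
      exact mul_nonneg (hq_nonneg z s) (hα_nonneg z s)
  refine ⟨hκ_nonneg, ?_, ?_⟩
  · intro z
    have hmem : z ∈ Finset.univ := Finset.mem_univ z
    rw [← Finset.add_sum_erase _ _ hmem, hκ_diag z]
    have herase : (Finset.univ.erase z) = Finset.univ.filter (fun s => s ≠ z) := by
      ext s; simp [Finset.mem_erase, and_comm]
    rw [show (∑ s ∈ Finset.univ.erase z, κ z s) =
        ∑ s ∈ Finset.univ.filter (fun s => s ≠ z), q z s * α z s by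
      rw [herase]; exact Finset.sum_congr rfl fun s hs => hκ_off z s (Finset.mem_filter.mp hs).2]
    rw [add_assoc, ← Finset.sum_add_distrib]
    have : ∀ s, q z s * (1 - α z s) + q z s * α z s = q z s := fun s => by ring
    simp_rw [this]
    rw [← herase, Finset.add_sum_erase _ _ hmem]
    exact hq_rowsum z
  · intro z s
    by_cases h : s = z
    · subst h; rfl
    · rw [hκ_off z s h, hκ_off s z (Ne.symm h)]
      set a := π z * q z s with ha
      set b := π s * q s z with hb
      have haz : 0 ≤ a := mul_nonneg (hπ_nonneg z) (hq_nonneg z s)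
      have hbz : 0 ≤ b := mul_nonneg (hπ_nonneg s) (hq_nonneg s z)
      have key : a * α z s = b * α s z := by
        rcases eq_or_lt_of_le haz with hA | hA
        · rcases eq_or_lt_of_le hbz with hB | hB
          · rw [← hA, ← hB]; ring
          · have h' := (hα s z).1 (by rw [← hb]; exact hB)
            rw [← hb, ← ha, ← hA, zero_div] at h'
            rw [h', ← hA]; simp
        · rcases eq_or_lt_of_le hbz with hB | hB
          · have h' := (hα z s).1 (by rw [← ha]; exact hA)
            rw [← ha, ← hb, ← hB, zero_div] at h'
            rw [h', ← hB]; simp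
          · have h1 := (hα z s).1 (by rw [← ha]; exact hA)
            have h2 := (hα s z).1 (by rw [← hb]; exact hB)
            rw [← ha, ← hb] at h1 h2
            rw [h1, h2, mul_min_of_nonneg _ _ haz, mul_min_of_nonneg _ _ hbz,
              mul_one, mul_one, mul_div_cancel₀ _ (ne_of_gt hA),
              mul_div_cancel₀ _ (ne_of_gt hB), min_comm]
      calc π z * (q z s * α z s) = a * α z s := by rw [ha]; ring
        _ = b * α s z := key
        _ = π s * (q s z * α s z) := by rw [hb]; ring
end

section
/- Let π be a distribution over a finite nonempty state space S and let q be a stochastic matrix over S. Define α(z,s) = min{1, π(s) q(s,z) / (π(z) q(z,s))} when π(z) q(z,s) > 0, and α(z,s) = 1 when π(z) q(z,s) = 0. Define the Metropolis–Hastings kernel κ by κ(z,s) = q(z,s) α(z,s) for s ≠ z, and κ(z,z) = q(z,z) + ∑_{s ≠ z} q(z,s) (1 − α(z,s)). Then π is an invariant distribution of κ: ∑_{z∈S} π(z) κ(z,s) = π(s) for all s ∈ S. -/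
/-- `π` is an invariant distribution of the Metropolis–Hastings kernel. -/
theorem metropolis_hastings_invariant
    {S : Type*} [Fintype S] [DecidableEq S] [Nonempty S]
    (π : S → ℝ)
    (hπ_nonneg : ∀ s, 0 ≤ π s)
    (hπ_sum : ∑ s, π s = 1)
    (q : S → S → ℝ)
    (hq_nonneg : ∀ z s, 0 ≤ q z s)
    (hq_rowsum : ∀ z, ∑ s, q z s = 1)
    (α : S → S → ℝ)
    (hα : ∀ z s, (0 < π z * q z s → α z s = min 1 (π s * q s z / (π z * q z s))) ∧
                 (π z * q z s = 0 → α z s = 1))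
    (κ : S → S → ℝ)
    (hκ_off : ∀ z s, s ≠ z → κ z s = q z s * α z s)
    (hκ_diag : ∀ z, κ z z = q z z + ∑ s ∈ Finset.univ.filter (fun s => s ≠ z),
      q z s * (1 - α z s)) :
    ∀ s, ∑ z, π z * κ z s = π s := by
  have key : ∀ z s, π z * (q z s * α z s) = min (π z * q z s) (π s * q s z) := by
    intro z s
    have hnn : 0 ≤ π z * q z s := mul_nonneg (hπ_nonneg z) (hq_nonneg z s)
    rcases hnn.lt_or_eq with hpos | hzero
    · have hα' := (hα z s).1 hpos
      rw [hα', ← mul_assoc, mul_min_of_nonneg _ _ hnn, mul_one,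
        mul_div_cancel₀ _ (ne_of_gt hpos)]
    · rw [(hα z s).2 hzero.symm, mul_one, ← hzero,
        min_eq_left (mul_nonneg (hπ_nonneg s) (hq_nonneg s z))]
  intro s
  have hsplit : ∀ z, π z * κ z s =
      (if z = s then π s * (q s s + ∑ t ∈ Finset.univ.filter (fun t => t ≠ s),
        q s t * (1 - α s t)) else π z * (q z s * α z s)) := by
    intro z
    by_cases h : z = s
    · subst h; simp [hκ_diag]
    · simp [h, hκ_off z s (Ne.symm h), mul_assoc]
  calc ∑ z, π z * κ z s
      = ∑ z, (if z = s then π s * (q s s + ∑ t ∈ Finset.univ.filter (fun t => t ≠ s),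
        q s t * (1 - α s t)) else π z * (q z s * α z s)) :=
        Finset.sum_congr rfl fun z _ => hsplit z
    _ = π s * (q s s + ∑ t ∈ Finset.univ.filter (fun t => t ≠ s),
        q s t * (1 - α s t)) + ∑ z ∈ Finset.univ.filter (fun z => z ≠ s),
        π z * (q z s * α z s) := by
        rw [← Finset.add_sum_erase Finset.univ _ (Finset.mem_univ s), if_pos rfl,
          Finset.filter_ne']
        congr 1
        refine Finset.sum_congr rfl fun z hz => ?_
        rw [if_neg (Finset.ne_of_mem_erase hz)]
    _ = π s := by
        have h1 : ∀ t ∈ Finset.univ.filter (fun t => t ≠ s),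
            π s * (q s t * (1 - α s t)) = π s * q s t - min (π s * q s t) (π t * q t s) := by
          intro t _
          rw [← key s t]; ring
        have h2 : ∀ z ∈ Finset.univ.filter (fun z => z ≠ s),
            π z * (q z s * α z s) = min (π s * q s z) (π z * q z s) := by
          intro z _; rw [key z s, min_comm]
        rw [Finset.sum_congr rfl h2, mul_add, Finset.mul_sum,
          Finset.sum_congr rfl h1, Finset.sum_sub_distrib, add_assoc, sub_add_cancel,
          ← Finset.mul_sum, ← mul_add, Finset.filter_ne',
          Finset.add_sum_erase Finset.univ _ (Finset.mem_univ s), hq_rowsum, mul_one]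
end

section
/- Let M be a stochastic matrix over a finite nonempty state space S such that every entry of M is positive, and let ε = min_{z,s} M(z,s). Then for every n ≥ 1, every starting pair (z₀, s₀) ∈ S × S, the sum over all sequences of pairs (z₁,s₁),…,(zₙ,sₙ) ∈ S × S with zᵢ ≠ sᵢ for all 1 ≤ i ≤ n of the product ∏_{i=1}^{n} M(z_{i-1}, z_i) · M(s_{i-1}, s_i) is at most (1 − ε)^n. (This is the coupling bound P(nN < T) ≤ (1 − ε)^n used in the proof of the convergence theorem, with M = κ^N.) -/
/-- One-step coupling bound: the off-diagonal mass of one step of two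
independent chains is at most `1 - ε`. -/
lemma coupling_step {S : Type*} [Fintype S] [DecidableEq S]
    (M : S → S → ℝ)
    (hM_nonneg : ∀ z s, 0 ≤ M z s)
    (hM_rowsum : ∀ z, ∑ s, M z s = 1)
    (ε : ℝ) (hlb : ∀ z s, ε ≤ M z s) (z s : S) :
    ∑ a : S × S, (if a.1 ≠ a.2 then M z a.1 * M s a.2 else 0) ≤ 1 - ε := by
  have htot : ∑ a : S × S, M z a.1 * M s a.2 = 1 := by
    rw [Fintype.sum_prod_type]
    simp only [← Finset.mul_sum, hM_rowsum, mul_one, hM_rowsum]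
  have hsplit : ∑ a : S × S, (if a.1 ≠ a.2 then M z a.1 * M s a.2 else 0)
      = 1 - ∑ a : S × S, (if a.1 = a.2 then M z a.1 * M s a.2 else 0) := by
    rw [eq_sub_iff_add_eq, ← Finset.sum_add_distrib, ← htot]
    apply Finset.sum_congr rfl
    intro a _
    by_cases h : a.1 = a.2 <;> simp [h]
  have hdiag : ∑ a : S × S, (if a.1 = a.2 then M z a.1 * M s a.2 else 0)
      = ∑ x : S, M z x * M s x := by
    rw [Fintype.sum_prod_type]
    apply Finset.sum_congr rfl
    intro x _
    simp
  have hge : ε ≤ ∑ x : S, M z x * M s x := by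
    calc ε = ∑ x : S, M z x * ε := by
            rw [← Finset.sum_mul, hM_rowsum, one_mul]
      _ ≤ ∑ x : S, M z x * M s x := by
            apply Finset.sum_le_sum
            intro x _
            exact mul_le_mul_of_nonneg_left (hlb s x) (hM_nonneg z x)
  rw [hsplit, hdiag]
  linarith

/-- Coupling bound: for a stochastic matrix `M` with all entries positive and
`ε` the smallest entry of `M`, the total probability that two independent
chains driven by `M`, started at `z₀` and `s₀`, disagree at every one of the
first `n` steps is at most `(1 - ε)^n`. -/
theorem coupling_bound
    {S : Type*} [Fintype S] [DecidableEq S] [Nonempty S]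
    (M : S → S → ℝ)
    (hM_nonneg : ∀ z s, 0 ≤ M z s)
    (hM_rowsum : ∀ z, ∑ s, M z s = 1)
    (hM_pos : ∀ z s, 0 < M z s)
    (ε : ℝ)
    (hε : IsLeast {x : ℝ | ∃ z s, x = M z s} ε) :
    ∀ n : ℕ, 1 ≤ n → ∀ z₀ s₀ : S,
      ∑ f ∈ Finset.univ.filter
          (fun f : Fin n → S × S => ∀ i, (f i).1 ≠ (f i).2),
        ∏ i : Fin n,
          M ((Fin.cons (z₀, s₀) f : Fin (n + 1) → S × S) i.castSucc).1 (f i).1 *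
          M ((Fin.cons (z₀, s₀) f : Fin (n + 1) → S × S) i.castSucc).2 (f i).2
      ≤ (1 - ε) ^ n := by
  obtain ⟨hmem, hlb'⟩ := hε
  have hlb : ∀ z s, ε ≤ M z s := fun z s => hlb' ⟨z, s, rfl⟩
  obtain ⟨z', s', hε_eq⟩ := hmem
  have hε_pos : 0 < ε := hε_eq ▸ hM_pos z' s'
  have hε_le1 : ε ≤ 1 := by
    have := hM_rowsum z'
    have h1 : M z' s' ≤ 1 := by
      rw [← this]
      exact Finset.single_le_sum (fun x _ => hM_nonneg z' x) (Finset.mem_univ s')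
    linarith [hε_eq ▸ h1]
  have key : ∀ (n : ℕ) (z₀ s₀ : S),
      ∑ f ∈ Finset.univ.filter
          (fun f : Fin n → S × S => ∀ i, (f i).1 ≠ (f i).2),
        ∏ i : Fin n,
          M ((Fin.cons (z₀, s₀) f : Fin (n + 1) → S × S) i.castSucc).1 (f i).1 *
          M ((Fin.cons (z₀, s₀) f : Fin (n + 1) → S × S) i.castSucc).2 (f i).2
      ≤ (1 - ε) ^ n := by
    intro n
    induction n with
    | zero => intro z₀ s₀; simp
    | succ n ih =>
      intro z₀ s₀
      rw [Finset.sum_filter]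
      rw [← (Fin.consEquiv (fun _ : Fin (n + 1) => S × S)).sum_comp]
      rw [Fintype.sum_prod_type]
      have hrw : ∀ (a : S × S) (g : Fin n → S × S),
          (if (∀ i : Fin (n+1),
              ((Fin.consEquiv (fun _ : Fin (n+1) => S × S)) (a, g) i).1 ≠
              ((Fin.consEquiv (fun _ : Fin (n+1) => S × S)) (a, g) i).2) then
            ∏ i : Fin (n+1),
              M ((Fin.cons (z₀, s₀) ((Fin.consEquiv (fun _ : Fin (n+1) => S × S)) (a, g)) : Fin (n + 2) → S × S) i.castSucc).1 (((Fin.consEquiv (fun _ : Fin (n+1) => S × S)) (a, g)) i).1 *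
              M ((Fin.cons (z₀, s₀) ((Fin.consEquiv (fun _ : Fin (n+1) => S × S)) (a, g)) : Fin (n + 2) → S × S) i.castSucc).2 (((Fin.consEquiv (fun _ : Fin (n+1) => S × S)) (a, g)) i).2
          else 0)
          = (if a.1 ≠ a.2 then M z₀ a.1 * M s₀ a.2 else 0) *
            (if (∀ i : Fin n, (g i).1 ≠ (g i).2) then
              ∏ i : Fin n,
                M ((Fin.cons (a.1, a.2) g : Fin (n + 1) → S × S) i.castSucc).1 (g i).1 *
                M ((Fin.cons (a.1, a.2) g : Fin (n + 1) → S × S) i.castSucc).2 (g i).2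
            else 0) := by
        intro a g
        simp only [Fin.consEquiv_apply, Fin.forall_fin_succ, Fin.prod_univ_succ,
          Fin.cons_zero, Fin.cons_succ, Fin.castSucc_zero, ← Fin.succ_castSucc]
        by_cases h1 : a.1 ≠ a.2 <;> by_cases h2 : ∀ i : Fin n, (g i).1 ≠ (g i).2 <;>
          simp [h1, h2, mul_assoc]
      calc ∑ a : S × S, ∑ g : Fin n → S × S, _
          = ∑ a : S × S, (if a.1 ≠ a.2 then M z₀ a.1 * M s₀ a.2 else 0) *
              ∑ g ∈ Finset.univ.filter
                (fun g : Fin n → S × S => ∀ i, (g i).1 ≠ (g i).2),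
                ∏ i : Fin n,
                  M ((Fin.cons (a.1, a.2) g : Fin (n + 1) → S × S) i.castSucc).1 (g i).1 *
                  M ((Fin.cons (a.1, a.2) g : Fin (n + 1) → S × S) i.castSucc).2 (g i).2 := by
            apply Finset.sum_congr rfl
            intro a _
            rw [Finset.sum_filter, Finset.mul_sum]
            apply Finset.sum_congr rfl
            intro g _
            exact hrw a g
        _ ≤ ∑ a : S × S, (if a.1 ≠ a.2 then M z₀ a.1 * M s₀ a.2 else 0) * (1 - ε) ^ n := by
            apply Finset.sum_le_sum
            intro a _
            by_cases h : a.1 ≠ a.2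
            · rw [if_pos h]
              exact mul_le_mul_of_nonneg_left (ih a.1 a.2)
                (mul_nonneg (hM_nonneg _ _) (hM_nonneg _ _))
            · simp [h]
        _ = (∑ a : S × S, (if a.1 ≠ a.2 then M z₀ a.1 * M s₀ a.2 else 0)) * (1 - ε) ^ n := by
            rw [Finset.sum_mul]
        _ ≤ (1 - ε) * (1 - ε) ^ n := by
            apply mul_le_mul_of_nonneg_right
              (coupling_step M hM_nonneg hM_rowsum ε hlb z₀ s₀)
              (pow_nonneg (by linarith) n)
        _ = (1 - ε) ^ (n + 1) := by ring
  intro n _ z₀ s₀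
  exact key n z₀ s₀
end

section
/- Let κ be an aperiodic stochastic matrix over a finite nonempty state space S with invariant distribution π. Then the convergence of (κ^n)(z,s) to π(s) is geometric: there exist C ≥ 0 and ρ ∈ [0,1) such that |(κ^n)(z,s) − π(s)| ≤ C ρ^n for all n ≥ 1 and all z, s ∈ S. -/
open Finset

section aux

variable {S : Type*} [Fintype S] [DecidableEq S] [Nonempty S]

private lemma convex_bounds (w v : S → ℝ) (hw : ∀ z, 0 ≤ w z) (hw1 : ∑ z, w z = 1) :
    (univ.inf' univ_nonempty v) ≤ ∑ z, w z * v z ∧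
      ∑ z, w z * v z ≤ univ.sup' univ_nonempty v := by
  constructor
  · calc univ.inf' univ_nonempty v = ∑ z, w z * univ.inf' univ_nonempty v := by
          rw [← Finset.sum_mul, hw1, one_mul]
        _ ≤ ∑ z, w z * v z :=
          Finset.sum_le_sum fun z _ => mul_le_mul_of_nonneg_left (inf'_le _ (mem_univ z)) (hw z)
  · calc ∑ z, w z * v z ≤ ∑ z, w z * univ.sup' univ_nonempty v :=
          Finset.sum_le_sum fun z _ => mul_le_mul_of_nonneg_left (le_sup' _ (mem_univ z)) (hw z)
        _ = univ.sup' univ_nonempty v := by rw [← Finset.sum_mul, hw1, one_mul]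

private lemma contract_pair (P : Matrix S S ℝ) (δ : ℝ) (hδ : 0 ≤ δ)
    (hP : ∀ z s, δ ≤ P z s) (hrow : ∀ z, ∑ s, P z s = 1) (v : S → ℝ) (z z' : S) :
    (∑ w, P z w * v w) - (∑ w, P z' w * v w) ≤
      (1 - (Fintype.card S : ℝ) * δ) *
        (univ.sup' univ_nonempty v - univ.inf' univ_nonempty v) := by
  set a := univ.inf' univ_nonempty v with ha
  set b := univ.sup' univ_nonempty v with hb
  have hba : 0 ≤ b - a := by
    obtain ⟨x⟩ := (inferInstance : Nonempty S)
    have h1 : a ≤ v x := inf'_le _ (mem_univ x)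
    have h2 : v x ≤ b := le_sup' _ (mem_univ x)
    linarith
  have key : ∀ w : S, (P z w - P z' w) * (v w - a) ≤ (P z w - δ) * (b - a) := by
    intro w
    have hva : 0 ≤ v w - a := by have := inf'_le v (mem_univ w); linarith
    have hvb : v w - a ≤ b - a := by have := le_sup' v (mem_univ w); linarith
    have hPδ : 0 ≤ P z w - δ := by have := hP z w; linarith
    rcases le_or_gt (P z w) (P z' w) with h | h
    · have h1 : (P z w - P z' w) * (v w - a) ≤ 0 :=
        mul_nonpos_of_nonpos_of_nonneg (by linarith) hva
      nlinarith
    · have h1 : (P z w - P z' w) * (v w - a) ≤ (P z w - P z' w) * (b - a) :=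
        mul_le_mul_of_nonneg_left hvb (by linarith)
      have h2 : (P z w - P z' w) * (b - a) ≤ (P z w - δ) * (b - a) :=
        mul_le_mul_of_nonneg_right (by have := hP z' w; linarith) hba
      linarith
  have step1 : (∑ w, P z w * v w) - (∑ w, P z' w * v w)
      = ∑ w, (P z w - P z' w) * (v w - a) := by
    have e : ∀ w ∈ univ, (P z w - P z' w) * (v w - a)
        = (P z w * v w - P z' w * v w) - (P z w - P z' w) * a := fun w _ => by ring
    rw [Finset.sum_congr rfl e, Finset.sum_sub_distrib, Finset.sum_sub_distrib,
      ← Finset.sum_mul, Finset.sum_sub_distrib, hrow z, hrow z']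
    ring
  rw [step1]
  calc ∑ w, (P z w - P z' w) * (v w - a) ≤ ∑ w, (P z w - δ) * (b - a) :=
        Finset.sum_le_sum fun w _ => key w
    _ = (1 - (Fintype.card S : ℝ) * δ) * (b - a) := by
        rw [← Finset.sum_mul, Finset.sum_sub_distrib, hrow z, Finset.sum_const,
          Finset.card_univ, nsmul_eq_mul]

end aux

/-- Geometric convergence for an aperiodic stochastic matrix with invariant
distribution `π`. -/
theorem geometric_convergence
    {S : Type*} [Fintype S] [DecidableEq S] [Nonempty S]
    (κ : Matrix S S ℝ)
    (hκ_nonneg : ∀ z s, 0 ≤ κ z s)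
    (hκ_rowsum : ∀ z, ∑ s, κ z s = 1)
    (π : S → ℝ)
    (hπ_nonneg : ∀ s, 0 ≤ π s)
    (hπ_sum : ∑ s, π s = 1)
    (hπ_inv : ∀ s, ∑ z, π z * κ z s = π s)
    (haperiodic : ∃ N : ℕ, ∀ n > N, ∀ z s, 0 < (κ ^ n) z s) :
    ∃ C : ℝ, 0 ≤ C ∧ ∃ ρ : ℝ, 0 ≤ ρ ∧ ρ < 1 ∧
      ∀ n : ℕ, 1 ≤ n → ∀ z s, |(κ ^ n) z s - π s| ≤ C * ρ ^ n := by
  obtain ⟨N, hN⟩ := haperiodic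
  -- basic facts about powers
  have hpow_nonneg : ∀ n z s, 0 ≤ (κ ^ n) z s := by
    intro n
    induction n with
    | zero => intro z s; rw [pow_zero]; by_cases h : z = s <;> simp [Matrix.one_apply, h]
    | succ n ih =>
      intro z s
      rw [pow_succ, Matrix.mul_apply]
      exact Finset.sum_nonneg fun w _ => mul_nonneg (ih z w) (hκ_nonneg w s)
  have hpow_rowsum : ∀ n z, ∑ s, (κ ^ n) z s = 1 := by
    intro n
    induction n with
    | zero => intro z; rw [pow_zero]; simp [Matrix.one_apply]
    | succ n ih =>
      intro z
      rw [pow_succ]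
      simp only [Matrix.mul_apply]
      rw [Finset.sum_comm]
      calc ∑ w, ∑ s, (κ ^ n) z w * κ w s = ∑ w, (κ ^ n) z w * ∑ s, κ w s := by
            simp [Finset.mul_sum]
        _ = 1 := by simp [hκ_rowsum, ih z]
  have hpow_inv : ∀ n s, ∑ z, π z * (κ ^ n) z s = π s := by
    intro n
    induction n with
    | zero => intro s; rw [pow_zero]; simp [Matrix.one_apply]
    | succ n ih =>
      intro s
      rw [pow_succ]
      simp only [Matrix.mul_apply, Finset.mul_sum]
      rw [Finset.sum_comm]
      calc ∑ w, ∑ z, π z * ((κ ^ n) z w * κ w s)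
          = ∑ w, (∑ z, π z * (κ ^ n) z w) * κ w s := by
            congr 1; funext w; rw [Finset.sum_mul]; congr 1; funext z; ring
        _ = ∑ w, π w * κ w s := by simp [ih]
        _ = π s := hπ_inv s
  set m := N + 1 with hm
  have hmpos : 0 < m := Nat.succ_pos N
  -- δ : minimal entry of κ ^ m
  set δ := (univ : Finset (S × S)).inf' univ_nonempty (fun p => (κ ^ m) p.1 p.2) with hδdef
  have hδpos : 0 < δ := by
    rw [hδdef, Finset.lt_inf'_iff]
    intro p _
    exact hN m (Nat.lt_succ_self N) p.1 p.2
  have hδle : ∀ z s, δ ≤ (κ ^ m) z s := fun z s =>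
    inf'_le (fun p : S × S => (κ ^ m) p.1 p.2) (mem_univ (z, s))
  set c := (Fintype.card S : ℝ) with hc
  have hcpos : 0 < c := by
    rw [hc]; exact_mod_cast Fintype.card_pos
  set θ := 1 - c * δ with hθ
  have hθlt1 : θ < 1 := by
    have : 0 < c * δ := mul_pos hcpos hδpos
    rw [hθ]; linarith
  set θ' := max θ (1/2) with hθ'
  have hθ'pos : (0:ℝ) < θ' := lt_of_lt_of_le (by norm_num) (le_max_right θ (1/2))
  have hθ'lt1 : θ' < 1 := max_lt hθlt1 (by norm_num)
  have hθ'le1 : θ' ≤ 1 := le_of_lt hθ'lt1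
  -- oscillation
  set o : ℕ → S → ℝ := fun n s =>
    univ.sup' univ_nonempty (fun z => (κ ^ n) z s)
      - univ.inf' univ_nonempty (fun z => (κ ^ n) z s) with ho
  have ho_nonneg : ∀ n s, 0 ≤ o n s := by
    intro n s
    obtain ⟨x⟩ := (inferInstance : Nonempty S)
    have h1 := inf'_le (fun z => (κ ^ n) z s) (mem_univ x)
    have h2 := le_sup' (fun z => (κ ^ n) z s) (mem_univ x)
    simp only [ho]; linarith
  have ho_le_one : ∀ n s, o n s ≤ 1 := by
    intro n s
    have h1 : univ.sup' univ_nonempty (fun z => (κ ^ n) z s) ≤ 1 := by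
      apply Finset.sup'_le
      intro z _
      calc (κ ^ n) z s ≤ ∑ t, (κ ^ n) z t :=
            Finset.single_le_sum (fun t _ => hpow_nonneg n z t) (mem_univ s)
        _ = 1 := hpow_rowsum n z
    have h2 : 0 ≤ univ.inf' univ_nonempty (fun z => (κ ^ n) z s) :=
      Finset.le_inf' _ _ fun z _ => hpow_nonneg n z s
    simp only [ho]; linarith
  -- contraction every m steps
  have ho_contract : ∀ n s, o (m + n) s ≤ θ' * o n s := by
    intro n s
    have hrepr : ∀ z, (κ ^ (m + n)) z s = ∑ w, (κ ^ m) z w * (κ ^ n) w s := by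
      intro z
      rw [pow_add, Matrix.mul_apply]
    obtain ⟨z0, _, hz0⟩ :=
      Finset.exists_mem_eq_sup' univ_nonempty (fun z => (κ ^ (m + n)) z s)
    obtain ⟨z1, _, hz1⟩ :=
      Finset.exists_mem_eq_inf' univ_nonempty (fun z => (κ ^ (m + n)) z s)
    have hkey := contract_pair (κ ^ m) δ (le_of_lt hδpos) hδle (hpow_rowsum m)
      (fun w => (κ ^ n) w s) z0 z1
    have h1 : o (m + n) s ≤ θ * o n s := by
      simp only [← hrepr] at hkey
      simp only [ho, hz0, hz1]
      exact hkey
    have h2 : θ * o n s ≤ θ' * o n s :=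
      mul_le_mul_of_nonneg_right (le_max_left θ (1/2)) (ho_nonneg n s)
    linarith
  -- iterate
  have ho_iter : ∀ s k r, o (r + k * m) s ≤ θ' ^ k := by
    intro s k
    induction k with
    | zero => intro r; simpa using ho_le_one r s
    | succ k ih =>
      intro r
      have heq : r + (k + 1) * m = m + (r + k * m) := by ring
      rw [heq]
      calc o (m + (r + k * m)) s ≤ θ' * o (r + k * m) s := ho_contract _ s
        _ ≤ θ' * θ' ^ k := mul_le_mul_of_nonneg_left (ih r) (le_of_lt hθ'pos)
        _ = θ' ^ (k + 1) := by ring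
  -- choose constants
  refine ⟨θ'⁻¹, le_of_lt (inv_pos.mpr hθ'pos), θ' ^ ((m:ℝ)⁻¹), Real.rpow_nonneg (le_of_lt hθ'pos) _,
    Real.rpow_lt_one (le_of_lt hθ'pos) hθ'lt1 (by positivity), ?_⟩
  intro n _ z s
  set q := n / m with hq
  set r := n % m with hr
  have hn_eq : n = r + q * m := by
    rw [hq, hr, Nat.mod_add_div' n m]
  -- |κ^n z s - π s| ≤ o n s
  have habs : |(κ ^ n) z s - π s| ≤ o n s := by
    have hmem := convex_bounds π (fun w => (κ ^ n) w s) hπ_nonneg hπ_sum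
    rw [hpow_inv n s] at hmem
    have h1 : (κ ^ n) z s ≤ univ.sup' univ_nonempty (fun w => (κ ^ n) w s) :=
      le_sup' (fun w => (κ ^ n) w s) (mem_univ z)
    have h2 : univ.inf' univ_nonempty (fun w => (κ ^ n) w s) ≤ (κ ^ n) z s :=
      inf'_le (fun w => (κ ^ n) w s) (mem_univ z)
    rw [abs_sub_le_iff]
    constructor <;> simp only [ho] <;> [linarith [hmem.1]; linarith [hmem.2]]
  have hbound : o n s ≤ θ' ^ q := by
    rw [hn_eq]; exact ho_iter s q r
  -- θ'^q ≤ θ'⁻¹ * (θ'^(1/m))^n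
  have hrq : (θ' : ℝ) ^ q ≤ θ'⁻¹ * (θ' ^ ((m:ℝ)⁻¹)) ^ n := by
    have hrn : (θ' ^ ((m:ℝ)⁻¹)) ^ n = θ' ^ ((m:ℝ)⁻¹ * n) := by
      rw [← Real.rpow_natCast (θ' ^ ((m:ℝ)⁻¹)) n, ← Real.rpow_mul (le_of_lt hθ'pos)]
    have hinv : θ'⁻¹ = θ' ^ (-1 : ℝ) := by
      rw [Real.rpow_neg_one]
    rw [hrn, hinv, ← Real.rpow_add hθ'pos]
    rw [← Real.rpow_natCast θ' q]
    apply Real.rpow_le_rpow_of_exponent_ge hθ'pos hθ'le1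
    -- -1 + m⁻¹ * n ≤ q
    have hmr : (m : ℝ) > 0 := by exact_mod_cast hmpos
    have hnlt : (n : ℝ) < (m : ℝ) * (q + 1) := by
      have : n < m * (q + 1) := by
        rw [hn_eq]
        have : r < m := Nat.mod_lt n hmpos
        calc r + q * m < m + q * m := by omega
          _ = m * (q + 1) := by ring
      exact_mod_cast this
    have : (m:ℝ)⁻¹ * n ≤ q + 1 := by
      rw [inv_mul_le_iff₀ hmr]
      nlinarith
    linarith
  calc |(κ ^ n) z s - π s| ≤ o n s := habs
    _ ≤ θ' ^ q := hbound
    _ ≤ θ'⁻¹ * (θ' ^ ((m:ℝ)⁻¹)) ^ n := hrq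
end
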